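/- arXiv:1207.2891 — 3 statements merged into one kernel-verified Lean document; each statement's English description precedes it below -/
import Mathlib

section
/- Let A be a pointed monoid and 𝔠 = (c₁, c₂, …) an infinite sequence of integers with each cᵢ ≥ 2. Let θ_c denote the dilation endomorphism a ↦ a^c, and let A^𝔠 be the colimit of A →^{θ_{c₁}} A →^{θ_{c₂}} ⋯. Then the natural map A^𝔠 → (A_red)^𝔠 is an isomorphism. -/
universe u v

namespace ToricMonoid

/-- An ideal of a pointed commutative monoid (= commutative monoid with absorbing zero). -/
def IsIdeal {A : Type u} [CommMonoidWithZero A] (I : Set A) : Prop :=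
  (0 : A) ∈ I ∧ ∀ a x : A, x ∈ I → a * x ∈ I

/-- A prime ideal: a proper ideal whose complement is multiplicatively closed. -/
def IsPrimeIdeal {A : Type u} [CommMonoidWithZero A] (p : Set A) : Prop :=
  IsIdeal p ∧ (1 : A) ∉ p ∧ ∀ a b : A, a ∉ p → b ∉ p → a * b ∉ p

/-- The radical of an ideal. -/
def mradical {A : Type u} [CommMonoidWithZero A] (I : Set A) : Set A :=
  {a : A | ∃ n : ℕ, 1 ≤ n ∧ a ^ n ∈ I}

/-- The nilradical: elements with some power equal to zero. -/
def mnilradical (A : Type u) [CommMonoidWithZero A] : Set A :=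
  {a : A | ∃ n : ℕ, 1 ≤ n ∧ a ^ n = 0}

/-- A pointed monoid is cancellative if `a*c = b*c` with `c ≠ 0` implies `a = b`. -/
def IsCancellative (A : Type u) [CommMonoidWithZero A] : Prop :=
  ∀ a b c : A, c ≠ 0 → a * c = b * c → a = b

/-- Torsionfree: `aⁿ = bⁿ` for some `n ≥ 1` implies `a = b`. -/
def IsTorsionfree (A : Type u) [CommMonoidWithZero A] : Prop :=
  ∀ (a b : A) (n : ℕ), 1 ≤ n → a ^ n = b ^ n → a = b

/-- Reduced: `xⁿ = yⁿ` for all sufficiently large `n` implies `x = y`. -/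
def IsReducedMonoid (A : Type u) [CommMonoidWithZero A] : Prop :=
  ∀ x y : A, (∃ N : ℕ, ∀ n ≥ N, x ^ n = y ^ n) → x = y

/-- Seminormal: reduced, and `x³ = y²` implies `x = z², y = z³` for some `z`. -/
def IsSeminormal (A : Type u) [CommMonoidWithZero A] : Prop :=
  IsReducedMonoid A ∧ ∀ x y : A, x ^ 3 = y ^ 2 → ∃ z : A, x = z ^ 2 ∧ y = z ^ 3

/-- Normal (for a cancellative monoid, phrased internally): whenever a fraction `a/b`
(with `b ≠ 0`) of the pointed group completion satisfies `(a/b)ⁿ = c ∈ A` (i.e.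
`aⁿ = bⁿ * c`) for some `n ≥ 1` and `c ≠ 0`, the fraction already lies in `A`
(i.e. `a = b * x` for some `x`). -/
def IsNormalMonoid (A : Type u) [CommMonoidWithZero A] : Prop :=
  ∀ a b c : A, b ≠ 0 → c ≠ 0 → (∃ n : ℕ, 1 ≤ n ∧ a ^ n = b ^ n * c) →
    ∃ x : A, a = b * x

/-- A morphism of pointed monoids. -/
def IsMonoidHom {A : Type u} {B : Type v} [CommMonoidWithZero A] [CommMonoidWithZero B]
    (f : A → B) : Prop :=
  f 0 = 0 ∧ f 1 = 1 ∧ ∀ a b : A, f (a * b) = f a * f b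

/-- `f : A → B` presents `B` as the quotient monoid `A/I` collapsing the ideal `I` to `0`. -/
def IsQuotientMap {A : Type u} {B : Type v} [CommMonoidWithZero A] [CommMonoidWithZero B]
    (I : Set A) (f : A → B) : Prop :=
  IsMonoidHom f ∧ Function.Surjective f ∧ (∀ x : A, f x = 0 ↔ x ∈ I) ∧
    ∀ a b : A, f a = f b ↔ (a = b ∨ (a ∈ I ∧ b ∈ I))

/-- Partially cancellative: isomorphic to `C/I` with `C` cancellative and `I` an ideal. -/
def IsPC (A : Type u) [CommMonoidWithZero A] : Prop :=
  ∃ (C : Type u) (iC : CommMonoidWithZero C) (I : Set C) (f : C → A),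
    @IsCancellative C iC ∧ @IsIdeal C iC I ∧ @IsQuotientMap C A iC inferInstance I f

/-- Partially cancellative torsionfree: isomorphic to `C/I` with `C` cancellative and
torsionfree and `I` an ideal. -/
def IsPCTF (A : Type u) [CommMonoidWithZero A] : Prop :=
  ∃ (C : Type u) (iC : CommMonoidWithZero C) (I : Set C) (f : C → A),
    @IsCancellative C iC ∧ @IsTorsionfree C iC ∧ @IsIdeal C iC I ∧
      @IsQuotientMap C A iC inferInstance I f

/-- A multiplicatively closed subset. -/
def MulClosed {A : Type u} [CommMonoidWithZero A] (S : Set A) : Prop :=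
  (1 : A) ∈ S ∧ ∀ a b : A, a ∈ S → b ∈ S → a * b ∈ S

/-- `f : A → B` presents `B` as the localization `S⁻¹A`. -/
def IsLocalizationMap {A : Type u} {B : Type v} [CommMonoidWithZero A] [CommMonoidWithZero B]
    (S : Set A) (f : A → B) : Prop :=
  IsMonoidHom f ∧ (∀ s ∈ S, IsUnit (f s)) ∧
    (∀ b : B, ∃ a : A, ∃ s ∈ S, b * f s = f a) ∧
    (∀ a a' : A, f a = f a' ↔ ∃ u ∈ S, a * u = a' * u)

/-- `i : A → B` is a seminormalization of `A`: `B` is seminormal, the induced map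
`A_red → B` is injective (`i a = i a'` iff `aⁿ = a'ⁿ` for all `n ≫ 0`), and every
`b ∈ B` has `bⁿ` in the image of `A` for all `n ≫ 0`. -/
def IsSeminormalization {A : Type u} {B : Type v} [CommMonoidWithZero A] [CommMonoidWithZero B]
    (i : A → B) : Prop :=
  IsMonoidHom i ∧ IsSeminormal B ∧
    (∀ a a' : A, i a = i a' ↔ ∃ N : ℕ, ∀ n ≥ N, a ^ n = a' ^ n) ∧
    ∀ b : B, ∃ N : ℕ, ∀ n ≥ N, ∃ a : A, b ^ n = i a

/-- `j : A → G` presents the pointed group `G` as the pointed group completion `A⁺` of a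
cancellative pointed monoid `A`. -/
def IsGroupCompletion {A : Type u} {G : Type v} [CommMonoidWithZero A] [CommGroupWithZero G]
    (j : A → G) : Prop :=
  IsMonoidHom j ∧ Function.Injective j ∧
    ∀ g : G, g ≠ 0 → ∃ a b : A, a ≠ 0 ∧ b ≠ 0 ∧ g = j a / j b

/-- Inside a group completion `j : A → G`: the seminormalization
`A_sn = {g | gⁿ ∈ A for all n ≫ 0}`. -/
def snSet {A : Type u} {G : Type v} [CommMonoidWithZero A] [CommGroupWithZero G]
    (j : A → G) : Set G :=
  {g : G | ∃ N : ℕ, ∀ n ≥ N, g ^ n ∈ Set.range j}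

/-- Inside a group completion `j : A → G`: the normalization
`A_nor = {g | gⁿ ∈ A for some n ≥ 1}`. -/
def norSet {A : Type u} {G : Type v} [CommMonoidWithZero A] [CommGroupWithZero G]
    (j : A → G) : Set G :=
  {g : G | ∃ n : ℕ, 1 ≤ n ∧ g ^ n ∈ Set.range j}

/-- The conductor ideal of `A ⊆ A_nor` (inside the group completion `G`). -/
def condSet {A : Type u} {G : Type v} [CommMonoidWithZero A] [CommGroupWithZero G]
    (j : A → G) : Set G :=
  {g : G | g ∈ Set.range j ∧ ∀ h ∈ norSet j, h * g ∈ Set.range j}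

/-- The prime spectrum of a pointed monoid. -/
def MSpec (A : Type u) [CommMonoidWithZero A] : Type u := {p : Set A // IsPrimeIdeal p}

/-- The Zariski topology on `MSpec A`: closed sets are `V(I) = {p | I ⊆ p}`. -/
instance {A : Type u} [CommMonoidWithZero A] : TopologicalSpace (MSpec A) :=
  TopologicalSpace.generateFrom
    {U : Set (MSpec A) | ∃ I : Set A, IsIdeal I ∧ U = {p : MSpec A | ¬ I ⊆ p.1}}

/-- The product `c n * c (n+1) * ⋯ * c (k-1)` of dilation exponents from stage `n`
to stage `k`. -/
def transPow (c : ℕ → ℕ) (n k : ℕ) : ℕ := (Finset.Ico n k).prod c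

/-- `ℓ : ℕ → A → L` presents `L` as the colimit `A^𝔠` of `A →^{θ_{c₀}} A →^{θ_{c₁}} ⋯`,
where `θ_c a = a^c` is dilation. -/
def IsDilatedColimit {A : Type u} {L : Type v} [CommMonoidWithZero A] [CommMonoidWithZero L]
    (c : ℕ → ℕ) (ℓ : ℕ → A → L) : Prop :=
  (∀ n : ℕ, IsMonoidHom (ℓ n)) ∧
  (∀ (n : ℕ) (a : A), ℓ (n + 1) (a ^ c n) = ℓ n a) ∧
  (∀ x : L, ∃ (n : ℕ) (a : A), ℓ n a = x) ∧
  ∀ (n m : ℕ) (a b : A), ℓ n a = ℓ m b ↔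
    ∃ k : ℕ, n ≤ k ∧ m ≤ k ∧ a ^ transPow c n k = b ^ transPow c m k

lemma monoidHom_pow {A : Type u} {B : Type v} [CommMonoidWithZero A] [CommMonoidWithZero B]
    {f : A → B} (hf : IsMonoidHom f) (a : A) (n : ℕ) : f (a ^ n) = f a ^ n := by
  induction n with
  | zero => simpa using hf.2.1
  | succ k ih => rw [pow_succ, hf.2.2, ih, pow_succ]

lemma two_pow_le_transPow (c : ℕ → ℕ) (hc : ∀ n : ℕ, 2 ≤ c n) (k N : ℕ) :
    2 ^ N ≤ transPow c k (k + N) := by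
  induction N with
  | zero => simp [transPow]
  | succ j ih =>
    have h : transPow c k (k + (j + 1)) = transPow c k (k + j) * c (k + j) := by
      unfold transPow
      rw [show k + (j + 1) = (k + j) + 1 by omega, Finset.prod_Ico_succ_top (by omega)]
    rw [h, pow_succ]
    exact Nat.mul_le_mul ih (hc _)

/-- For a pointed monoid `A` and a sequence `𝔠 = (c₀, c₁, …)` of integers
`≥ 2`, the natural map `A^𝔠 → (A_red)^𝔠` of dilated colimits is an isomorphism: any
compatible monoid map `φ` between presentations of the two colimits is bijective. -/
theorem dilated_colimit_red_iso {A Ar L L' : Type u}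
    [CommMonoidWithZero A] [CommMonoidWithZero Ar]
    [CommMonoidWithZero L] [CommMonoidWithZero L']
    (c : ℕ → ℕ) (hc : ∀ n : ℕ, 2 ≤ c n)
    (π : A → Ar) (hπ : IsMonoidHom π) (hπs : Function.Surjective π)
    (hπk : ∀ a b : A, π a = π b ↔ ∃ N : ℕ, ∀ n ≥ N, a ^ n = b ^ n)
    (ℓ : ℕ → A → L) (hℓ : IsDilatedColimit c ℓ)
    (ℓ' : ℕ → Ar → L') (hℓ' : IsDilatedColimit c ℓ')
    (φ : L → L') (hφ : IsMonoidHom φ)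
    (hcomm : ∀ (n : ℕ) (a : A), φ (ℓ n a) = ℓ' n (π a)) :
    Function.Bijective φ := by
  obtain ⟨hhom, hstep, hsurj, hker⟩ := hℓ
  obtain ⟨hhom', hstep', hsurj', hker'⟩ := hℓ'
  constructor
  · intro x y hxy
    obtain ⟨n, a, rfl⟩ := hsurj x
    obtain ⟨m, b, rfl⟩ := hsurj y
    rw [hcomm, hcomm] at hxy
    obtain ⟨k, hnk, hmk, hk⟩ := (hker' n m (π a) (π b)).1 hxy
    rw [← monoidHom_pow hπ, ← monoidHom_pow hπ] at hk
    obtain ⟨N, hN⟩ := (hπk _ _).1 hk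
    refine (hker n m a b).2 ⟨k + N, by omega, by omega, ?_⟩
    have ht : N ≤ transPow c k (k + N) :=
      le_trans (Nat.le_of_lt (Nat.lt_two_pow_self (n := N))) (two_pow_le_transPow c hc k N)
    have h1 : transPow c n (k + N) = transPow c n k * transPow c k (k + N) :=
      (Finset.prod_Ico_consecutive c hnk (by omega)).symm
    have h2 : transPow c m (k + N) = transPow c m k * transPow c k (k + N) :=
      (Finset.prod_Ico_consecutive c hmk (by omega)).symm
    rw [h1, h2, pow_mul, pow_mul, hN _ ht]
  · intro x'
    obtain ⟨n, b, rfl⟩ := hsurj' x'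
    obtain ⟨a, rfl⟩ := hπs b
    exact ⟨ℓ n a, hcomm n a⟩

end ToricMonoid
end

section
/- Let A be a partially cancellative pointed monoid and 𝔠 = (c₁, c₂, …) a sequence of integers with each cᵢ ≥ 2. Then the natural map A^𝔠 → (A_sn)^𝔠 of dilated colimits is an isomorphism. -/
universe u v

namespace ToricMonoid

lemma IsMonoidHom.map_pow {A : Type u} {B : Type v} [CommMonoidWithZero A]
    [CommMonoidWithZero B] {f : A → B} (hf : IsMonoidHom f) (a : A) :
    ∀ n : ℕ, f (a ^ n) = f a ^ n := by
  intro n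
  induction n with
  | zero => simpa using hf.2.1
  | succ n ih => rw [pow_succ, pow_succ, hf.2.2, ih]

lemma transPow_mul (c : ℕ → ℕ) {n k k' : ℕ} (h1 : n ≤ k) (h2 : k ≤ k') :
    transPow c n k * transPow c k k' = transPow c n k' :=
  Finset.prod_Ico_consecutive c h1 h2

lemma transPow_ge {c : ℕ → ℕ} (hc : ∀ n : ℕ, 2 ≤ c n) {n k : ℕ} (h : n ≤ k) :
    2 ^ (k - n) ≤ transPow c n k := by
  have : (2 : ℕ) ^ (k - n) = (Finset.Ico n k).prod (fun _ => 2) := by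
    rw [Finset.prod_const, Nat.card_Ico]
  rw [this]
  exact Finset.prod_le_prod' fun i _ => hc i

lemma ell_shift {A : Type u} {L : Type u} [CommMonoidWithZero A] [CommMonoidWithZero L]
    {c : ℕ → ℕ} {ℓ : ℕ → A → L} (hℓ : IsDilatedColimit c ℓ) (n : ℕ) (a : A) :
    ∀ k : ℕ, n ≤ k → ℓ k (a ^ transPow c n k) = ℓ n a := by
  intro k hk
  induction k, hk using Nat.le_induction with
  | base => simp [transPow]
  | succ k hk ih =>
      have ht : transPow c n (k + 1) = transPow c n k * c k := by
        simpa [transPow] using Finset.prod_Ico_succ_top hk c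
      rw [ht, pow_mul, hℓ.2.1, ih]

/-- For a partially cancellative pointed monoid `A` and a sequence
`𝔠 = (c₀, c₁, …)` of integers `≥ 2`, the natural map `A^𝔠 → (A_sn)^𝔠` of dilated
colimits is an isomorphism: any compatible monoid map `φ` between presentations of the
two colimits is bijective. -/
theorem dilated_colimit_sn_iso {A As L L' : Type u}
    [CommMonoidWithZero A] [CommMonoidWithZero As]
    [CommMonoidWithZero L] [CommMonoidWithZero L']
    (hpc : IsPC A) (c : ℕ → ℕ) (hc : ∀ n : ℕ, 2 ≤ c n)
    (i : A → As) (hi : IsSeminormalization i)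
    (ℓ : ℕ → A → L) (hℓ : IsDilatedColimit c ℓ)
    (ℓ' : ℕ → As → L') (hℓ' : IsDilatedColimit c ℓ')
    (φ : L → L') (hφ : IsMonoidHom φ)
    (hcomm : ∀ (n : ℕ) (a : A), φ (ℓ n a) = ℓ' n (i a)) :
    Function.Bijective φ := by
  constructor
  · -- injectivity
    intro x y hxy
    obtain ⟨n, a, rfl⟩ := hℓ.2.2.1 x
    obtain ⟨m, b, rfl⟩ := hℓ.2.2.1 y
    rw [hcomm, hcomm] at hxy
    obtain ⟨k, hnk, hmk, hpow⟩ := (hℓ'.2.2.2 n m (i a) (i b)).mp hxy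
    rw [← hi.1.map_pow, ← hi.1.map_pow] at hpow
    obtain ⟨N, hN⟩ := (hi.2.2.1 _ _).mp hpow
    set k' := k + N with hk'
    have hR : N ≤ transPow c k k' := by
      calc N ≤ 2 ^ N := (Nat.lt_two_pow_self (n := N)).le
        _ = 2 ^ (k' - k) := by simp [hk']
        _ ≤ transPow c k k' := transPow_ge hc (by omega)
    have hkk' : k ≤ k' := by omega
    refine (hℓ.2.2.2 n m a b).mpr ⟨k', hnk.trans hkk', hmk.trans hkk', ?_⟩
    rw [← transPow_mul c hnk hkk', ← transPow_mul c hmk hkk', pow_mul, pow_mul]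
    exact hN _ hR
  · -- surjectivity
    intro x
    obtain ⟨n, b, rfl⟩ := hℓ'.2.2.1 x
    obtain ⟨N, hN⟩ := hi.2.2.2 b
    set k := n + N with hk
    have hR : N ≤ transPow c n k := by
      calc N ≤ 2 ^ N := (Nat.lt_two_pow_self (n := N)).le
        _ = 2 ^ (k - n) := by simp [hk]
        _ ≤ transPow c n k := transPow_ge hc (by omega)
    obtain ⟨a, ha⟩ := hN _ hR
    refine ⟨ℓ k a, ?_⟩
    rw [hcomm, ← ha, ell_shift hℓ' n b k (by omega)]

end ToricMonoid
end

section
/- Let A be a cancellative pointed monoid and m ∈ A a nonzero element. If u ∈ A[1/m] can be written u = b/m^k with b ∈ A and u^r = m^c for integers r ≥ 1, c ≥ 1, then u^l ∈ A for all sufficiently large l; in particular, there exists L such that u^l ∈ A for all l ≥ L. -/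
universe u v

namespace ToricMonoid

/-- Let `A` be a cancellative pointed monoid, `m ∈ A` nonzero, and
`f : A → A[1/m]` the localization at the powers of `m`.  If `u ∈ A[1/m]` can be written
`u = b/mᵏ` (i.e. `u * f(mᵏ) = f b`) and `uʳ = f(m^c)` for integers `r ≥ 1`, `c ≥ 1`,
then `uˡ` lies in (the image of) `A` for all sufficiently large `l`. -/
theorem eventually_power_in_monoid {A : Type u} {B : Type v}
    [CommMonoidWithZero A] [CommMonoidWithZero B]
    (hA : IsCancellative A) (m : A) (hm : m ≠ 0)
    (f : A → B) (hf : IsLocalizationMap {x : A | ∃ n : ℕ, x = m ^ n} f)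
    (u : B) (b : A) (k : ℕ) (hub : u * f (m ^ k) = f b)
    (r c : ℕ) (hr : 1 ≤ r) (hc : 1 ≤ c) (hur : u ^ r = f (m ^ c)) :
    ∃ L : ℕ, ∀ l ≥ L, ∃ a : A, u ^ l = f a := by
  obtain ⟨⟨hf0, hf1, hfmul⟩, -⟩ := hf
  have hfpow : ∀ (x : A) (n : ℕ), f (x ^ n) = f x ^ n := by
    intro x n
    induction n with
    | zero => simpa using hf1
    | succ n ih => rw [pow_succ, pow_succ, hfmul, ih]
  obtain ⟨c', rfl⟩ : ∃ c', c = c' + 1 := ⟨c - 1, (Nat.succ_pred_eq_of_pos hc).symm⟩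
  -- key: u ^ (r*k+1) is in the image of f
  have key : u ^ (r * k + 1) = f (m ^ (c' * k) * b) := by
    have h1 : u ^ (r * k) = f (m ^ ((c' + 1) * k)) := by
      rw [pow_mul, hur, ← hfpow, ← pow_mul]
    have h2 : m ^ ((c' + 1) * k) = m ^ (c' * k) * m ^ k := by
      rw [← pow_add]; congr 1; ring
    calc u ^ (r * k + 1) = u ^ (r * k) * u := by rw [pow_succ]
      _ = f (m ^ (c' * k)) * (u * f (m ^ k)) := by
          rw [h1, h2, hfmul, mul_assoc, mul_comm (f (m ^ k)) u]
      _ = f (m ^ (c' * k)) * f b := by rw [hub]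
      _ = f (m ^ (c' * k) * b) := (hfmul _ _).symm
  refine ⟨r * (r * k + 1), fun l hl => ?_⟩
  set s := l % r with hs_def
  set q := l / r with hq_def
  have hlq : q * r + s = l := by
    rw [hq_def, hs_def, mul_comm]
    exact Nat.div_add_mod l r
  have hs : s < r := Nat.mod_lt _ hr
  have hq : s * k ≤ q := by
    have h1 : r * k + 1 ≤ q := by
      rw [hq_def, Nat.le_div_iff_mul_le hr]
      calc (r * k + 1) * r = r * (r * k + 1) := by ring
        _ ≤ l := hl
    calc s * k ≤ r * k := Nat.mul_le_mul_right _ (le_of_lt hs)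
      _ ≤ q := le_trans (Nat.le_succ _) h1
  have hl_eq : l = (q - s * k) * r + s * (r * k + 1) := by
    have : (q - s * k) * r + s * (r * k + 1) = (q - s * k + s * k) * r + s := by ring
    rw [this, Nat.sub_add_cancel hq, hlq]
  refine ⟨(m ^ (c' + 1)) ^ (q - s * k) * (m ^ (c' * k) * b) ^ s, ?_⟩
  rw [hl_eq, pow_add, pow_mul', pow_mul', hur, key]
  simp [hfmul, hfpow]

end ToricMonoid
end
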